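/- There exists a simple graph on 22 vertices that is 10-regular and triangle-distinct. -/

import Mathlib

/-- The triangle-degree of a vertex `v` of a simple graph `G`: the number of triangles
(3-cliques) of `G` that contain `v`. -/
noncomputable def triangleDegree {V : Type*} (G : SimpleGraph V) (v : V) : ℕ :=
  {s | s ∈ G.cliqueSet 3 ∧ v ∈ s}.ncard

/-- A simple graph is triangle-distinct if all its vertices have pairwise distinct
triangle-degrees. -/
def TriangleDistinct {V : Type*} (G : SimpleGraph V) : Prop :=
  Function.Injective (triangleDegree G)

lemma triangleDegree_eq_pairs {V : Type*} [Fintype V] [LinearOrder V]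
    (G : SimpleGraph V) [DecidableRel G.Adj] (v : V) :
    triangleDegree G v =
      (Finset.univ.filter (fun p : V × V =>
        p.1 < p.2 ∧ G.Adj v p.1 ∧ G.Adj v p.2 ∧ G.Adj p.1 p.2)).card := by
  classical
  have hset : {s | s ∈ G.cliqueSet 3 ∧ v ∈ s} =
      ↑((G.cliqueFinset 3).filter (fun s => v ∈ s)) := by
    ext s
    simp [SimpleGraph.mem_cliqueSet_iff, SimpleGraph.mem_cliqueFinset_iff]
  rw [triangleDegree, hset, Set.ncard_coe_finset]
  refine (Finset.card_bij (fun p _ => insert v {p.1, p.2}) ?_ ?_ ?_).symm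
  · rintro ⟨a, b⟩ hp
    simp only [Finset.mem_filter, Finset.mem_univ, true_and] at hp
    obtain ⟨hab, hva, hvb, hab2⟩ := hp
    simp only [Finset.mem_filter, SimpleGraph.mem_cliqueFinset_iff]
    refine ⟨?_, by simp⟩
    rw [SimpleGraph.is3Clique_triple_iff]
    exact ⟨hva, hvb, hab2⟩
  · rintro ⟨a, b⟩ hp ⟨c, d⟩ hq h
    simp only [Finset.mem_filter, Finset.mem_univ, true_and] at hp hq
    obtain ⟨hab, hva, hvb, -⟩ := hp
    obtain ⟨hcd, hvc, hvd, -⟩ := hq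
    have hav : a ≠ v := fun h' => G.irrefl (h' ▸ hva)
    have hbv : b ≠ v := fun h' => G.irrefl (h' ▸ hvb)
    have hcv : c ≠ v := fun h' => G.irrefl (h' ▸ hvc)
    have hdv : d ≠ v := fun h' => G.irrefl (h' ▸ hvd)
    have h2 : ({a, b} : Finset V) = {c, d} := by
      have := congrArg (fun s => Finset.erase s v) h
      simpa [Finset.erase_insert, Finset.erase_eq_of_notMem,
        Finset.mem_insert, Finset.mem_singleton, hav, hbv, hcv, hdv,
        Ne.symm hav, Ne.symm hbv, Ne.symm hcv, Ne.symm hdv] using this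
    have ha : a = c ∨ a = d := by
      have : a ∈ ({c, d} : Finset V) := h2 ▸ (by simp)
      simpa using this
    have hb : b = c ∨ b = d := by
      have : b ∈ ({c, d} : Finset V) := h2 ▸ (by simp)
      simpa using this
    have key2 : a = c ∧ b = d := by
      rcases ha with h1 | h1 <;> rcases hb with h2 | h2
      · exact absurd (h1.trans h2.symm) (ne_of_lt hab)
      · exact ⟨h1, h2⟩
      · exact absurd (lt_trans (hab.trans_eq h2) (hcd.trans_eq h1.symm)) (lt_irrefl a)
      · exact absurd (h1.trans h2.symm) (ne_of_lt hab)
    simp [key2.1, key2.2]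
  · intro s hs
    simp only [Finset.mem_filter, SimpleGraph.mem_cliqueFinset_iff] at hs
    obtain ⟨hclique, hv⟩ := hs
    rw [SimpleGraph.is3Clique_iff] at hclique
    obtain ⟨a, b, c, hab, hac, hbc, rfl⟩ := hclique
    simp only [Finset.mem_insert, Finset.mem_singleton] at hv
    have key : ∀ x y : V, G.Adj v x → G.Adj v y → G.Adj x y →
        (∃ p ∈ Finset.univ.filter (fun p : V × V =>
          p.1 < p.2 ∧ G.Adj v p.1 ∧ G.Adj v p.2 ∧ G.Adj p.1 p.2),
          insert v ({p.1, p.2} : Finset V) = insert v {x, y}) := by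
      intro x y hvx hvy hxy
      rcases lt_or_gt_of_ne hxy.ne with hlt | hgt
      · exact ⟨(x, y), by simp [hlt, hvx, hvy, hxy], rfl⟩
      · exact ⟨(y, x), by simp [hgt, hvx, hvy, hxy.symm], by
          rw [Finset.pair_comm]⟩
    rcases hv with rfl | rfl | rfl
    · obtain ⟨p, hp, he⟩ := key b c hab hac hbc
      exact ⟨p, hp, he⟩
    · obtain ⟨p, hp, he⟩ := key a c hab.symm hbc hac
      refine ⟨p, hp, he.trans ?_⟩
      ext z; simp; tauto
    · obtain ⟨p, hp, he⟩ := key a b hac.symm hbc.symm hab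
      refine ⟨p, hp, he.trans ?_⟩
      ext z; simp; tauto

/-- Bitmask adjacency rows of an explicit 10-regular triangle-distinct graph
on 22 vertices (found by computer search). -/
def tdRows : Fin 22 → ℕ :=
  ![3966130, 728837, 1100026, 2320836, 759557, 3835653, 2308876, 204557, 2384122,
    1368306, 1872051, 2449614, 1369298, 2825032, 3349260, 1840693, 2386138, 2646266,
    1679105, 1483827, 841253, 223593]

/-- The explicit graph. -/
def tdGraph : SimpleGraph (Fin 22) where
  Adj u v := Nat.testBit (tdRows u) v.val
  symm := by
    have h : ∀ u v : Fin 22, Nat.testBit (tdRows u) v.val = true →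
        Nat.testBit (tdRows v) u.val = true := by decide
    exact ⟨fun u v hv => h u v hv⟩
  loopless := by
    have h : ∀ u : Fin 22, ¬ (Nat.testBit (tdRows u) u.val = true) := by decide
    exact ⟨fun u hv => h u hv⟩

instance : DecidableRel tdGraph.Adj :=
  fun u v => inferInstanceAs (Decidable (Nat.testBit (tdRows u) v.val = true))

/-- The computable pair-count version of the triangle degree of `tdGraph`. -/
def tdCount (v : Fin 22) : ℕ :=
  (Finset.univ.filter (fun p : Fin 22 × Fin 22 =>
    p.1 < p.2 ∧ tdGraph.Adj v p.1 ∧ tdGraph.Adj v p.2 ∧ tdGraph.Adj p.1 p.2)).card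

lemma tdGraph_regular : tdGraph.IsRegularOfDegree 10 := by
  show ∀ v, tdGraph.degree v = 10
  decide

lemma tdCount_injective : Function.Injective tdCount := by decide

lemma tdGraph_triangleDistinct : TriangleDistinct tdGraph := by
  intro a b hab
  apply tdCount_injective
  have ha := triangleDegree_eq_pairs tdGraph a
  have hb := triangleDegree_eq_pairs tdGraph b
  unfold tdCount
  rw [← ha, ← hb, hab]

open scoped Classical in
/-- There exists a simple graph on 22 vertices that is 10-regular and triangle-distinct. -/
theorem exists_regular_triangle_distinct_22_10 :
    ∃ G : SimpleGraph (Fin 22), G.IsRegularOfDegree 10 ∧ TriangleDistinct G := by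
  refine ⟨tdGraph, fun v => ?_, tdGraph_triangleDistinct⟩
  have h := tdGraph_regular v
  convert h using 2
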